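/- arXiv:0811.4576 — 4 statements merged into one kernel-verified Lean document; each statement's English description precedes it below -/
import Mathlib

section
/- For 0 < t < 1/2, the series Σ_{k=1}^∞ |sin(kπt)/(kπt)|^2 equals (1 - t)/(2t), equivalently 1 + 2Σ_{k=1}^∞ (sin(kπt)/(kπt))^2 = 1/t. -/
/-! The Fourier series of the Bernoulli polynomial `B₂(x) = x² - x + 1/6` on `[0, 1]` gives
`∑ cos (2πnx) / n² = π² B₂(x)`. Subtracting it from `∑ 1 / n² = π² / 6` and using
`1 - cos 2θ = 2 sin² θ` yields `∑ sin² (nπx) / n² = π² x (1 - x) / 2` on `[0, 1]`; dividing by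
`(πt)²` gives the identity. -/

open Real Set

lemma hasSum_cos_div_sq {x : ℝ} (hx : x ∈ Icc (0 : ℝ) 1) :
    HasSum (fun n : ℕ => cos (2 * π * n * x) / (n : ℝ) ^ 2) (π ^ 2 * (x ^ 2 - x + 6⁻¹)) := by
  have h := hasSum_one_div_nat_pow_mul_cos one_ne_zero hx
  rw [← bernoulliFun] at h
  norm_num at h
  convert h using 1
  · ext n
    ring
  · ring

lemma hasSum_sin_sq_div_sq {x : ℝ} (hx : x ∈ Icc (0 : ℝ) 1) :
    HasSum (fun n : ℕ => sin (n * π * x) ^ 2 / (n : ℝ) ^ 2) (π ^ 2 * x * (1 - x) / 2) := by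
  have h := (hasSum_zeta_two.sub (hasSum_cos_div_sq hx)).div_const 2
  rw [show π ^ 2 * x * (1 - x) / 2 = (π ^ 2 / 6 - π ^ 2 * (x ^ 2 - x + 6⁻¹)) / 2 by ring]
  refine h.congr_fun fun n => ?_
  rw [sin_sq_eq_half_sub]
  ring_nf

lemma hasSum_sinc_sq {t : ℝ} (ht0 : 0 < t) (ht1 : t ≤ 1) :
    HasSum (fun k : ℕ => (sin ((k + 1) * π * t) / ((k + 1) * π * t)) ^ 2)
      ((1 - t) / (2 * t)) := by
  have h := (hasSum_sin_sq_div_sq ⟨ht0.le, ht1⟩).div_const ((π * t) ^ 2)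
  rw [← hasSum_nat_add_iff' 1] at h
  rw [show (1 - t) / (2 * t) = π ^ 2 * t * (1 - t) / 2 / (π * t) ^ 2 -
      ∑ n ∈ Finset.range 1, sin (n * π * t) ^ 2 / (n : ℝ) ^ 2 / (π * t) ^ 2 by
    simp only [Finset.sum_range_one, CharP.cast_eq_zero, zero_mul, sin_zero,
      zero_pow two_ne_zero, zero_div, sub_zero]
    field_simp]
  refine h.congr_fun fun k => ?_
  push_cast
  field_simp

theorem sum_sinc_sq (t : ℝ) (ht0 : 0 < t) (ht : t < 1 / 2) :
    (∑' k : ℕ, (Real.sin ((k + 1) * Real.pi * t) / ((k + 1) * Real.pi * t)) ^ 2)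
        = (1 - t) / (2 * t) ∧
    1 + 2 * ∑' k : ℕ, (Real.sin ((k + 1) * Real.pi * t) / ((k + 1) * Real.pi * t)) ^ 2
        = 1 / t := by
  have h := (hasSum_sinc_sq ht0 (by linarith)).tsum_eq
  refine ⟨h, ?_⟩
  rw [h]
  field_simp
  ring
end

section
/- sup over 0 < x of (2 sin²x)/(πx) is attained and is strictly greater than 0.46 and strictly less than 0.462. -/
open Real

lemma aux_nonneg {f f' : ℝ → ℝ} (hf : ∀ t, HasDerivAt f (f' t) t)
    (h0 : f 0 = 0) (hd : ∀ t, 0 ≤ t → 0 ≤ f' t) {t : ℝ} (ht : 0 ≤ t) : 0 ≤ f t := by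
  have hdf : Differentiable ℝ f := fun x => (hf x).differentiableAt
  have hmono : MonotoneOn f (Set.Ici (0:ℝ)) := by
    apply monotoneOn_of_deriv_nonneg (convex_Ici 0) hdf.continuous.continuousOn
      (fun x _ => (hdf x).differentiableWithinAt)
    intro x hx
    rw [(hf x).deriv]
    exact hd x (le_of_lt (by simpa using hx))
  have := hmono Set.self_mem_Ici ht ht
  linarith

lemma sin_ge3 {t : ℝ} (ht : 0 ≤ t) : t - t^3/6 ≤ sin t := by
  have hF : ∀ s : ℝ, HasDerivAt (fun s => Real.sin s - (s - s^3/6))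
      (Real.cos s - (1 - (3:ℕ) * s^2 / 6)) s := fun s => by
    exact (Real.hasDerivAt_sin s).sub ((hasDerivAt_id s).sub ((hasDerivAt_pow 3 s).div_const 6))
  have := aux_nonneg hF (by simp) (fun s hs => by
    have := Real.one_sub_sq_div_two_le_cos (x := s)
    push_cast; nlinarith) ht
  linarith

lemma cos_le4 {t : ℝ} (ht : 0 ≤ t) : cos t ≤ 1 - t^2/2 + t^4/24 := by
  have hF : ∀ s : ℝ, HasDerivAt (fun s => (1 - s^2/2 + s^4/24) - Real.cos s)
      ((0 - (2:ℕ)*s^1/2 + (4:ℕ)*s^3/24) - (-Real.sin s)) s := fun s => by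
    exact ((((hasDerivAt_const s (1:ℝ)).sub ((hasDerivAt_pow 2 s).div_const 2)).add
      ((hasDerivAt_pow 4 s).div_const 24)).sub (Real.hasDerivAt_cos s))
  have := aux_nonneg hF (by simp) (fun s hs => by
    have := sin_ge3 hs; push_cast; nlinarith) ht
  linarith

lemma sin_le5 {t : ℝ} (ht : 0 ≤ t) : sin t ≤ t - t^3/6 + t^5/120 := by
  have hF : ∀ s : ℝ, HasDerivAt (fun s => (s - s^3/6 + s^5/120) - Real.sin s)
      ((1 - (3:ℕ)*s^2/6 + (5:ℕ)*s^4/120) - Real.cos s) s := fun s => by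
    exact (((hasDerivAt_id s).sub ((hasDerivAt_pow 3 s).div_const 6)).add
      ((hasDerivAt_pow 5 s).div_const 120)).sub (Real.hasDerivAt_sin s)
  have := aux_nonneg hF (by simp) (fun s hs => by
    have := cos_le4 hs; push_cast; nlinarith) ht
  linarith

lemma cos_ge6 {t : ℝ} (ht : 0 ≤ t) : 1 - t^2/2 + t^4/24 - t^6/720 ≤ cos t := by
  have hF : ∀ s : ℝ, HasDerivAt (fun s => Real.cos s - (1 - s^2/2 + s^4/24 - s^6/720))
      ((-Real.sin s) - (0 - (2:ℕ)*s^1/2 + (4:ℕ)*s^3/24 - (6:ℕ)*s^5/720)) s := fun s => by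
    exact (Real.hasDerivAt_cos s).sub ((((hasDerivAt_const s (1:ℝ)).sub
      ((hasDerivAt_pow 2 s).div_const 2)).add ((hasDerivAt_pow 4 s).div_const 24)).sub
      ((hasDerivAt_pow 6 s).div_const 720))
  have := aux_nonneg hF (by simp) (fun s hs => by
    have := sin_le5 hs; push_cast; nlinarith) ht
  linarith

lemma sin_ge7 {t : ℝ} (ht : 0 ≤ t) : t - t^3/6 + t^5/120 - t^7/5040 ≤ sin t := by
  have hF : ∀ s : ℝ, HasDerivAt (fun s => Real.sin s - (s - s^3/6 + s^5/120 - s^7/5040))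
      (Real.cos s - (1 - (3:ℕ)*s^2/6 + (5:ℕ)*s^4/120 - (7:ℕ)*s^6/5040)) s := fun s => by
    exact (Real.hasDerivAt_sin s).sub ((((hasDerivAt_id s).sub
      ((hasDerivAt_pow 3 s).div_const 6)).add ((hasDerivAt_pow 5 s).div_const 120)).sub
      ((hasDerivAt_pow 7 s).div_const 5040))
  have := aux_nonneg hF (by simp) (fun s hs => by
    have := cos_ge6 hs; push_cast; nlinarith) ht
  linarith

lemma cos_le8 {t : ℝ} (ht : 0 ≤ t) : cos t ≤ 1 - t^2/2 + t^4/24 - t^6/720 + t^8/40320 := by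
  have hF : ∀ s : ℝ, HasDerivAt
      (fun s => (1 - s^2/2 + s^4/24 - s^6/720 + s^8/40320) - Real.cos s)
      ((0 - (2:ℕ)*s^1/2 + (4:ℕ)*s^3/24 - (6:ℕ)*s^5/720 + (8:ℕ)*s^7/40320) - (-Real.sin s)) s :=
    fun s => by
    exact (((((hasDerivAt_const s (1:ℝ)).sub ((hasDerivAt_pow 2 s).div_const 2)).add
      ((hasDerivAt_pow 4 s).div_const 24)).sub ((hasDerivAt_pow 6 s).div_const 720)).add
      ((hasDerivAt_pow 8 s).div_const 40320)).sub (Real.hasDerivAt_cos s)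
  have := aux_nonneg hF (by simp) (fun s hs => by
    have := sin_ge7 hs; push_cast; nlinarith) ht
  linarith

lemma sin_le9 {t : ℝ} (ht : 0 ≤ t) : sin t ≤ t - t^3/6 + t^5/120 - t^7/5040 + t^9/362880 := by
  have hF : ∀ s : ℝ, HasDerivAt
      (fun s => (s - s^3/6 + s^5/120 - s^7/5040 + s^9/362880) - Real.sin s)
      ((1 - (3:ℕ)*s^2/6 + (5:ℕ)*s^4/120 - (7:ℕ)*s^6/5040 + (9:ℕ)*s^8/362880) - Real.cos s) s :=
    fun s => by
    exact ((((((hasDerivAt_id s).sub ((hasDerivAt_pow 3 s).div_const 6)).add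
      ((hasDerivAt_pow 5 s).div_const 120)).sub ((hasDerivAt_pow 7 s).div_const 5040)).add
      ((hasDerivAt_pow 9 s).div_const 362880))).sub (Real.hasDerivAt_sin s)
  have := aux_nonneg hF (by simp) (fun s hs => by
    have := cos_le8 hs; push_cast; nlinarith) ht
  linarith

lemma cos_ge10 {t : ℝ} (ht : 0 ≤ t) :
    1 - t^2/2 + t^4/24 - t^6/720 + t^8/40320 - t^10/3628800 ≤ cos t := by
  have hF : ∀ s : ℝ, HasDerivAt
      (fun s => Real.cos s - (1 - s^2/2 + s^4/24 - s^6/720 + s^8/40320 - s^10/3628800))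
      ((-Real.sin s) - (0 - (2:ℕ)*s^1/2 + (4:ℕ)*s^3/24 - (6:ℕ)*s^5/720 + (8:ℕ)*s^7/40320
        - (10:ℕ)*s^9/3628800)) s := fun s => by
    exact (Real.hasDerivAt_cos s).sub ((((((hasDerivAt_const s (1:ℝ)).sub
      ((hasDerivAt_pow 2 s).div_const 2)).add ((hasDerivAt_pow 4 s).div_const 24)).sub
      ((hasDerivAt_pow 6 s).div_const 720)).add ((hasDerivAt_pow 8 s).div_const 40320)).sub
      ((hasDerivAt_pow 10 s).div_const 3628800))
  have := aux_nonneg hF (by simp) (fun s hs => by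
    have := sin_le9 hs; push_cast; nlinarith) ht
  linarith
lemma key_poly {t : ℝ} (h0 : 0 ≤ t) (h1 : t ≤ 2.78) :
    t^2/2 - t^4/24 + t^6/720 - t^8/40320 + t^10/3628800 ≤ 0.7257 * t := by
  nlinarith [sq_nonneg (t - 2.33), sq_nonneg (t*(t-2.33)), sq_nonneg (t^2*(t-2.33)),
    sq_nonneg (t^3*(t-2.33)), mul_nonneg h0 (sub_nonneg.2 h1), sq_nonneg t,
    mul_nonneg (mul_nonneg h0 h0) (sub_nonneg.2 h1), sq_nonneg (t^4*(t-2.33)),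
    mul_nonneg (mul_nonneg (mul_nonneg h0 h0) h0) (sub_nonneg.2 h1)]

lemma global_upper {y : ℝ} (hy : 0 < y) :
    2 * Real.sin y ^ 2 / (Real.pi * y) < 0.462 := by
  have hpi := Real.pi_gt_d6
  have hden : 0 < Real.pi * y := by positivity
  rw [div_lt_iff₀ hden]
  have hsq : Real.sin y ^ 2 = 1/2 - Real.cos (2*y) / 2 := Real.sin_sq_eq_half_sub y
  rcases le_or_gt y 1.39 with hle | hgt
  · have ht0 : (0:ℝ) ≤ 2*y := by linarith
    have ht1 : 2*y ≤ 2.78 := by linarith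
    have hcos := cos_ge10 ht0
    have hkey := key_poly ht0 ht1
    nlinarith [hcos, hkey, mul_pos (by linarith : (0:ℝ) < 0.462*Real.pi - 2*0.7257) hy]
  · have := Real.neg_one_le_cos (2*y)
    nlinarith

lemma outside_upper {y : ℝ} (hy : 0 < y) (h : y ≤ 0.7 ∨ 1.39 ≤ y) :
    2 * Real.sin y ^ 2 / (Real.pi * y) ≤ 0.46 := by
  have hpi := Real.pi_gt_d6
  have hden : 0 < Real.pi * y := by positivity
  rw [div_le_iff₀ hden]
  rcases h with h | h
  · have hs1 : Real.sin y ≤ y := Real.sin_le hy.le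
    have hs0 : 0 ≤ Real.sin y := Real.sin_nonneg_of_nonneg_of_le_pi hy.le (by linarith)
    nlinarith
  · have h1 : Real.sin y ^ 2 ≤ 1 := Real.sin_sq_le_one y
    nlinarith

lemma witness_lower : 0.46 < 2 * Real.sin (7/6) ^ 2 / (Real.pi * (7/6)) := by
  have hpi := Real.pi_lt_d6
  have hpi0 := Real.pi_gt_d6
  have hden : 0 < Real.pi * ((7:ℝ)/6) := by positivity
  rw [lt_div_iff₀ hden]
  have hs : (7:ℝ)/6 - (7/6)^3/6 + (7/6)^5/120 - (7/6)^7/5040 ≤ Real.sin (7/6) :=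
    sin_ge7 (by norm_num)
  nlinarith [hs]

theorem gamma_two_attained_and_bounds :
    ∃ x : ℝ, 0 < x ∧
      (∀ y : ℝ, 0 < y →
        2 * Real.sin y ^ 2 / (Real.pi * y) ≤ 2 * Real.sin x ^ 2 / (Real.pi * x)) ∧
      0.46 < 2 * Real.sin x ^ 2 / (Real.pi * x) ∧
      2 * Real.sin x ^ 2 / (Real.pi * x) < 0.462 := by
  set f : ℝ → ℝ := fun y => 2 * Real.sin y ^ 2 / (Real.pi * y) with hf
  have hcont : ContinuousOn f (Set.Icc (0.7:ℝ) 1.39) := by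
    apply ContinuousOn.div
    · fun_prop
    · fun_prop
    · intro x hx
      have : (0:ℝ) < x := lt_of_lt_of_le (by norm_num) hx.1
      positivity
  have hmem : (7:ℝ)/6 ∈ Set.Icc (0.7:ℝ) 1.39 := by norm_num
  obtain ⟨x, hxS, hmax⟩ := isCompact_Icc.exists_isMaxOn ⟨7/6, hmem⟩ hcont
  have hx0 : (0:ℝ) < x := lt_of_lt_of_le (by norm_num) hxS.1
  have hlow : 0.46 < f x := lt_of_lt_of_le witness_lower (hmax hmem)
  refine ⟨x, hx0, ?_, hlow, global_upper hx0⟩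
  intro y hy
  rcases le_or_gt y 0.7 with h | h
  · exact le_trans (outside_upper hy (Or.inl h)) hlow.le
  rcases le_or_gt y 1.39 with h2 | h2
  · exact hmax ⟨h.le, h2⟩
  · exact le_trans (outside_upper hy (Or.inr h2.le)) hlow.le
end

section
/- max over 0 < t < 1/2 of 3·sin⁴(πt)/(π⁴t³) is strictly greater than 0.495. -/
/-!
Write `f t = 3 sin⁴(πt) / (π⁴t³) = 3t · (sin(πt)/(πt))⁴`. Then `f t ≤ 3t ≤ 0.3` for `t ≤ 1/10`, and
`f (1/2) = 24/π⁴ < 0.3`, whereas `f (27/100) > 0.495`. Hence the maximum of `f` on the compact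
interval `[1/10, 1/2]` is attained at some `t < 1/2` and dominates `f` on all of `(0, 1/2)`.
The value at `27/100` is estimated through `sin²(27π/100) = (1 + sin(π/25))/2` and
`sin x ≥ x - x³/6`.
-/

open Real Set

theorem exists_isMaxOn_Ioo_of_continuousOn_Icc {f : ℝ → ℝ} {l a b c : ℝ}
    (hf : ContinuousOn f (Icc a b)) (hc : c ∈ Icc a b) (hb : f b < f c)
    (hlow : ∀ s ∈ Ioo l a, f s ≤ f c) :
    ∃ t ∈ Ico a b, IsMaxOn f (Ioo l b) t ∧ f c ≤ f t := by
  obtain ⟨t, ⟨hat, htb_le⟩, hmax⟩ := isCompact_Icc.exists_isMaxOn ⟨c, hc⟩ hf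
  have hct : f c ≤ f t := hmax hc
  have htb : t ≠ b := by
    rintro rfl
    exact hb.not_ge hct
  refine ⟨t, ⟨hat, htb_le.lt_of_ne htb⟩, fun s hs ↦ ?_, hct⟩
  rcases lt_or_ge s a with hsa | has
  · exact (hlow s ⟨hs.1, hsa⟩).trans hct
  · exact hmax ⟨has, hs.2.le⟩

theorem sin_sq_pi_div_four_add (y : ℝ) : sin (π / 4 + y) ^ 2 = (1 + sin (2 * y)) / 2 := by
  rw [sin_sq_eq_half_sub, show 2 * (π / 4 + y) = 2 * y + π / 2 by ring, cos_add_pi_div_two]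
  ring

theorem sin_pi_div_twentyfive_gt : (0.1253329 : ℝ) < sin (π / 25) := by
  have hcube : (π / 25) ^ 3 < (0.12566372 : ℝ) ^ 3 :=
    pow_lt_pow_left₀ (by linarith [pi_lt_d6]) (by positivity) three_ne_zero
  linarith [sin_gt_sub_cube (x := π / 25) (by positivity), pi_gt_d6]

noncomputable def concentrationProfile (t : ℝ) : ℝ := 3 * sin (π * t) ^ 4 / (π ^ 4 * t ^ 3)

theorem continuousOn_concentrationProfile : ContinuousOn concentrationProfile (Ioi 0) :=
  ContinuousOn.div (by fun_prop) (by fun_prop) fun t ht ↦ by have : 0 < t := ht; positivity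

theorem concentrationProfile_le_three_mul (t : ℝ) (ht : 0 < t) :
    concentrationProfile t ≤ 3 * t := by
  have hsin : sin (π * t) ^ 4 ≤ (π * t) ^ 4 := by
    simpa only [← pow_mul] using pow_le_pow_left₀ (sq_nonneg _) (sin_sq_le_sq (x := π * t)) 2
  rw [concentrationProfile, div_le_iff₀ (by positivity)]
  linarith

theorem concentrationProfile_half_lt : concentrationProfile (1 / 2) < 0.3 := by
  have hpi : (3 : ℝ) ^ 4 < π ^ 4 := pow_lt_pow_left₀ pi_gt_three (by norm_num) four_ne_zero
  rw [concentrationProfile, show π * (1 / 2) = π / 2 by ring, sin_pi_div_two,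
    div_lt_iff₀ (by positivity)]
  linarith

theorem concentrationProfile_27_100_gt : (0.495 : ℝ) < concentrationProfile (27 / 100) := by
  have hsq : (0.5626664 : ℝ) < sin (π * (27 / 100)) ^ 2 := by
    rw [show π * (27 / 100) = π / 4 + π / 50 by ring, sin_sq_pi_div_four_add,
      show 2 * (π / 50) = π / 25 by ring]
    linarith [sin_pi_div_twentyfive_gt]
  have hpi : π ^ 4 < (3.141593 : ℝ) ^ 4 := pow_lt_pow_left₀ pi_lt_d6 pi_pos.le four_ne_zero
  rw [concentrationProfile, lt_div_iff₀ (by positivity)]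
  nlinarith [pow_lt_pow_left₀ hsq (by norm_num) two_ne_zero]

theorem gamma_four_lower_bound :
    ∃ t : ℝ, 0 < t ∧ t < 1 / 2 ∧
      (∀ s : ℝ, 0 < s → s < 1 / 2 →
        3 * Real.sin (Real.pi * s) ^ 4 / (Real.pi ^ 4 * s ^ 3) ≤
          3 * Real.sin (Real.pi * t) ^ 4 / (Real.pi ^ 4 * t ^ 3)) ∧
      0.495 < 3 * Real.sin (Real.pi * t) ^ 4 / (Real.pi ^ 4 * t ^ 3) := by
  have hpeak := concentrationProfile_27_100_gt
  have hpeak := concentrationProfile_27_100_gt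
  obtain ⟨t, ⟨hat, htb⟩, hmax, hct⟩ :=
    exists_isMaxOn_Ioo_of_continuousOn_Icc (l := 0) (a := 1 / 10) (b := 1 / 2) (c := 27 / 100)
      (continuousOn_concentrationProfile.mono fun s hs ↦ lt_of_lt_of_le (by norm_num) hs.1)
      (by norm_num) (by linarith [concentrationProfile_half_lt, hpeak])
      fun s hs ↦ by linarith [concentrationProfile_le_three_mul s hs.1, hs.2]
  exact ⟨t, lt_of_lt_of_le (by norm_num) hat, htb, fun s hs₀ hs₁ ↦ hmax ⟨hs₀, hs₁⟩,
    hpeak.trans_le hct⟩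
end

section
/- Let p > 2. There exists a constant C_p such that for any α_k ∈ [0,1] and b_k ∈ ℂ (k = 0,…,N), if X_k are independent Bernoulli random variables with P(X_k = 1) = α_k, then E(|Σ_{k=0}^N b_k(X_k − α_k)|^p) ≤ C_p · (max_k |b_k|)^p · (1 + Σ_{k=0}^N α_k)^{p/2}. -/
open Complex MeasureTheory ProbabilityTheory Finset

/-
Write `S = ∑ b_k (X_k - α_k)`, `M = max ‖b_k‖` and `σ = M √(1 + ∑ α_k)`. A centered Bernoulli
variable satisfies `E exp (t (X - α)) ≤ exp (α t²)` for `|t| ≤ 1`, so by independence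
`E exp (± T / σ) ≤ e` for `T` the real or the imaginary part of `S`. As
`|x| ^ p ≤ (1 + ⌈p⌉!) (eˣ + e⁻ˣ)`, this gives `E |T| ^ p ≤ 2 e (1 + ⌈p⌉!) σ ^ p`, and
`‖S‖ ^ p ≤ 2 ^ (p - 1) (|Re S| ^ p + |Im S| ^ p)` concludes.

The `X_k` are not assumed measurable. A coordinate `X_j` that is not a.e.-measurable has junk
mean `α_j = 0`, and it does not affect the integrand almost everywhere unless the integral is
itself junk: if the integrand depended on `X_j` on an atom of positive measure of the other
coordinates, a measurable version of it would separate `{X_j = 1}` from `{X_j = 0}` there, and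
independence would force `μ {X_j = 1} + μ {X_j = 0} ≤ 1`, making `{X_j = 1}` null-measurable.
-/

theorem Real.abs_rpow_le_mul_exp_add_exp_neg {p : ℝ} (hp : 0 ≤ p) (t : ℝ) :
    |t| ^ p ≤ (1 + (⌈p⌉₊).factorial) * (Real.exp t + Real.exp (-t)) := by
  set n := ⌈p⌉₊
  have h_rpow : |t| ^ p ≤ 1 + |t| ^ n := by
    rcases le_or_gt |t| 1 with h | h
    · linarith [Real.rpow_le_one (abs_nonneg t) h hp, pow_nonneg (abs_nonneg t) n]
    · have := Real.rpow_le_rpow_of_exponent_le h.le (Nat.le_ceil p)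
      rw [Real.rpow_natCast] at this
      linarith
  have h_pow : |t| ^ n ≤ n.factorial * Real.exp |t| := by
    have := Real.pow_div_factorial_le_exp _ (abs_nonneg t) n
    rwa [div_le_iff₀' (by positivity)] at this
  have h_one : 1 ≤ Real.exp |t| := Real.one_le_exp (abs_nonneg t)
  calc |t| ^ p ≤ (1 + n.factorial) * Real.exp |t| := by nlinarith
    _ ≤ _ := by gcongr; exact Real.exp_abs_le t

theorem Complex.norm_rpow_le_two_rpow_mul {p : ℝ} (hp : 1 ≤ p) (z : ℂ) :
    ‖z‖ ^ p ≤ 2 ^ (p - 1) * (|z.re| ^ p + |z.im| ^ p) := by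
  have h := NNReal.rpow_add_le_mul_rpow_add_rpow ⟨|z.re|, abs_nonneg _⟩ ⟨|z.im|, abs_nonneg _⟩ hp
  calc ‖z‖ ^ p ≤ (|z.re| + |z.im|) ^ p := by
        gcongr; exact Complex.norm_le_abs_re_add_abs_im z
    _ ≤ _ := by exact_mod_cast h

section Bernoulli

variable {Ω ι : Type*} [MeasurableSpace Ω] {μ : Measure Ω} [Fintype ι]

theorem integrable_comp_of_forall_eq_zero_or_one [IsFiniteMeasure μ] {X : ι → Ω → ℝ}
    (hXm : ∀ i, AEMeasurable (X i) μ) (h01 : ∀ i ω, X i ω = 0 ∨ X i ω = 1)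
    {φ : (ι → ℝ) → ℝ} (hφ : Measurable φ) : Integrable (fun ω => φ (fun i => X i ω)) μ := by
  have h_fin : (Set.univ.pi fun _ : ι => ({0, 1} : Set ℝ)).Finite :=
    Set.Finite.pi fun _ => Set.toFinite ({0, 1} : Set ℝ)
  obtain ⟨C, hC⟩ := (h_fin.image fun v => ‖φ v‖).bddAbove
  exact .of_bound (hφ.comp_aemeasurable (aemeasurable_pi_lambda _ hXm)).aestronglyMeasurable C
    (ae_of_all _ fun ω => hC ⟨_, fun i _ => h01 i ω, rfl⟩)

theorem mgf_sub_le_exp [IsProbabilityMeasure μ] {X : Ω → ℝ} {α t : ℝ} (hXm : AEMeasurable X μ)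
    (h01 : ∀ ω, X ω = 0 ∨ X ω = 1) (hα : ∫ ω, X ω ∂μ = α) (ht : |t| ≤ 1) :
    mgf (fun ω => X ω - α) μ t ≤ Real.exp (α * t ^ 2) := by
  have hX_int : Integrable X μ :=
    .of_bound hXm.aestronglyMeasurable 1
      (ae_of_all _ fun ω => by rcases h01 ω with h | h <;> simp [h])
  have hα0 : 0 ≤ α := hα ▸ integral_nonneg fun ω => by rcases h01 ω with h | h <;> simp [h]
  have h_affine : ∀ ω, Real.exp (t * (X ω - α))
      = Real.exp (-(t * α)) * (1 + X ω * (Real.exp t - 1)) := by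
    intro ω
    rcases h01 ω with h | h
    · simp [h]
    · rw [h, one_mul, add_sub_cancel, ← Real.exp_add]; ring_nf
  have h_quad : Real.exp t - 1 ≤ t + t ^ 2 := by
    linarith [(abs_le.1 (Real.abs_exp_sub_one_sub_id_le ht)).2]
  calc mgf (fun ω => X ω - α) μ t = Real.exp (-(t * α)) * (1 + α * (Real.exp t - 1)) := by
        rw [mgf, integral_congr_ae (ae_of_all _ h_affine), integral_const_mul,
          integral_add (integrable_const _) (hX_int.mul_const _), integral_mul_const, hα]
        simp
    _ ≤ Real.exp (-(t * α)) * Real.exp (α * (Real.exp t - 1)) := by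
        gcongr; linarith [Real.add_one_le_exp (α * (Real.exp t - 1))]
    _ ≤ Real.exp (-(t * α)) * Real.exp (α * (t + t ^ 2)) := by gcongr
    _ = Real.exp (α * t ^ 2) := by rw [← Real.exp_add]; ring_nf

theorem integral_exp_sum_le [IsProbabilityMeasure μ] {X : ι → Ω → ℝ} {α s : ι → ℝ}
    (hX : iIndepFun X μ) (hXm : ∀ i, AEMeasurable (X i) μ)
    (h01 : ∀ i ω, X i ω = 0 ∨ X i ω = 1) (hα : ∀ i, ∫ ω, X i ω ∂μ = α i)
    (hs : ∀ i, |s i| ≤ 1) :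
    ∫ ω, Real.exp (∑ i, s i * (X i ω - α i)) ∂μ ≤ Real.exp (∑ i, α i * s i ^ 2) := by
  have hV : iIndepFun (fun i ω => s i * (X i ω - α i)) μ :=
    hX.comp (fun i x => s i * (x - α i)) fun i => by fun_prop
  have h_mgf := hV.mgf_sum₀ (t := 1) (fun i => by fun_prop) univ
  simp only [mgf, one_mul, Finset.sum_apply] at h_mgf
  rw [h_mgf, Real.exp_sum]
  exact prod_le_prod (fun i _ => integral_nonneg fun _ => (Real.exp_pos _).le)
    fun i _ => mgf_sub_le_exp (hXm i) (h01 i) (hα i) (hs i)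


theorem integral_abs_rpow_sum_le_of_abs_le_one [IsProbabilityMeasure μ] {X : ι → Ω → ℝ}
    {α s : ι → ℝ} {p : ℝ} (hp : 0 ≤ p) (hX : iIndepFun X μ) (hXm : ∀ i, AEMeasurable (X i) μ)
    (h01 : ∀ i ω, X i ω = 0 ∨ X i ω = 1) (hα : ∀ i, ∫ ω, X i ω ∂μ = α i)
    (hs : ∀ i, |s i| ≤ 1) (hsα : ∑ i, α i * s i ^ 2 ≤ 1) :
    ∫ ω, |∑ i, s i * (X i ω - α i)| ^ p ∂μ ≤ 2 * (1 + (⌈p⌉₊).factorial) * Real.exp 1 := by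
  set K : ℝ := 1 + (⌈p⌉₊).factorial
  have h_int (v : ι → ℝ) : Integrable (fun ω => Real.exp (∑ i, v i * (X i ω - α i))) μ :=
    integrable_comp_of_forall_eq_zero_or_one hXm h01
      (φ := fun x => Real.exp (∑ i, v i * (x i - α i))) (by fun_prop)
  have h_exp (v : ι → ℝ) (hv : ∀ i, |v i| ≤ 1) (hvα : ∑ i, α i * v i ^ 2 ≤ 1) :
      ∫ ω, Real.exp (∑ i, v i * (X i ω - α i)) ∂μ ≤ Real.exp 1 :=
    (integral_exp_sum_le hX hXm h01 hα hv).trans (Real.exp_le_exp.2 hvα)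
  have h_neg (ω : Ω) : -∑ i, s i * (X i ω - α i) = ∑ i, -s i * (X i ω - α i) := by
    simp only [neg_mul, sum_neg_distrib]
  calc ∫ ω, |∑ i, s i * (X i ω - α i)| ^ p ∂μ
      ≤ ∫ ω, K * (Real.exp (∑ i, s i * (X i ω - α i))
          + Real.exp (∑ i, -s i * (X i ω - α i))) ∂μ := by
        refine integral_mono_of_nonneg (ae_of_all _ fun ω => by positivity)
          (((h_int s).add (h_int _)).const_mul K) (ae_of_all _ fun ω => ?_)
        beta_reduce
        rw [← h_neg]
        exact Real.abs_rpow_le_mul_exp_add_exp_neg hp _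
    _ = K * (∫ ω, Real.exp (∑ i, s i * (X i ω - α i)) ∂μ
          + ∫ ω, Real.exp (∑ i, -s i * (X i ω - α i)) ∂μ) := by
        rw [integral_const_mul, integral_add (h_int s) (h_int _)]
    _ ≤ K * (Real.exp 1 + Real.exp 1) := by
        gcongr
        · exact h_exp s hs hsα
        · exact h_exp _ (by simpa using hs) (by simpa using hsα)
    _ = 2 * K * Real.exp 1 := by ring

theorem integral_abs_rpow_sum_le [IsProbabilityMeasure μ] {X : ι → Ω → ℝ}
    {α s : ι → ℝ} {p σ : ℝ} (hp : 0 < p) (hσ : 0 ≤ σ) (hX : iIndepFun X μ)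
    (hXm : ∀ i, AEMeasurable (X i) μ) (h01 : ∀ i ω, X i ω = 0 ∨ X i ω = 1)
    (hα : ∀ i, ∫ ω, X i ω ∂μ = α i) (hs : ∀ i, |s i| ≤ σ) (hsα : ∑ i, α i * s i ^ 2 ≤ σ ^ 2) :
    ∫ ω, |∑ i, s i * (X i ω - α i)| ^ p ∂μ
      ≤ 2 * (1 + (⌈p⌉₊).factorial) * Real.exp 1 * σ ^ p := by
  rcases hσ.eq_or_lt with rfl | hσ
  · have hs0 (i : ι) : s i = 0 := abs_nonpos_iff.1 (hs i)
    simp [hs0, Real.zero_rpow hp.ne']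
  have h_scale (ω : Ω) : |∑ i, s i * (X i ω - α i)| ^ p
      = σ ^ p * |∑ i, s i / σ * (X i ω - α i)| ^ p := by
    rw [← Real.mul_rpow hσ.le (abs_nonneg _), ← abs_of_pos hσ, ← abs_mul, abs_of_pos hσ,
      mul_sum]
    congr 2
    refine sum_congr rfl fun i _ => ?_
    field_simp
  have h_unit : ∫ ω, |∑ i, s i / σ * (X i ω - α i)| ^ p ∂μ
      ≤ 2 * (1 + (⌈p⌉₊).factorial) * Real.exp 1 := by
    refine integral_abs_rpow_sum_le_of_abs_le_one hp.le hX hXm h01 hα (fun i => ?_) ?_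
    · rw [abs_div, abs_of_pos hσ, div_le_one hσ]
      exact hs i
    · simp_rw [div_pow, mul_div_assoc', ← sum_div]
      exact (div_le_one (by positivity)).2 hsα
  rw [integral_congr_ae (ae_of_all _ h_scale), integral_const_mul, mul_comm]
  gcongr

theorem integral_norm_rpow_sum_le [IsProbabilityMeasure μ] {X : ι → Ω → ℝ}
    {α : ι → ℝ} {b : ι → ℂ} {p M : ℝ} (hp : 1 ≤ p) (hM : 0 ≤ M) (hb : ∀ i, ‖b i‖ ≤ M)
    (hX : iIndepFun X μ) (hXm : ∀ i, AEMeasurable (X i) μ)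
    (h01 : ∀ i ω, X i ω = 0 ∨ X i ω = 1) (hα : ∀ i, ∫ ω, X i ω ∂μ = α i) :
    ∫ ω, ‖∑ i, b i * (X i ω - α i)‖ ^ p ∂μ
      ≤ 2 ^ (p + 1) * (1 + (⌈p⌉₊).factorial) * Real.exp 1 * M ^ p * (1 + ∑ i, α i) ^ (p / 2) := by
  set K : ℝ := 1 + (⌈p⌉₊).factorial
  set A : ℝ := ∑ i, α i
  have hα0 (i : ι) : 0 ≤ α i := hα i ▸ integral_nonneg fun ω => by
    rcases h01 i ω with h | h <;> simp [h]
  have hA : 0 ≤ A := sum_nonneg fun i _ => hα0 i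
  set σ : ℝ := M * √(1 + A)
  have hMσ : M ≤ σ := le_mul_of_one_le_right hM (Real.one_le_sqrt.2 (by linarith))
  have h_moment (c : ι → ℝ) (hc : ∀ i, |c i| ≤ M) :
      ∫ ω, |∑ i, c i * (X i ω - α i)| ^ p ∂μ ≤ 2 * K * Real.exp 1 * σ ^ p := by
    refine integral_abs_rpow_sum_le (by linarith) (by positivity) hX hXm h01 hα
      (fun i => (hc i).trans hMσ) ?_
    calc ∑ i, α i * c i ^ 2 ≤ ∑ i, α i * M ^ 2 := sum_le_sum fun i _ =>
          mul_le_mul_of_nonneg_left (sq_le_sq' (abs_le.1 (hc i)).1 (abs_le.1 (hc i)).2) (hα0 i)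
      _ ≤ σ ^ 2 := by
          rw [← sum_mul, mul_pow, Real.sq_sqrt (by linarith)]
          nlinarith
  have h_int (c : ι → ℝ) : Integrable (fun ω => |∑ i, c i * (X i ω - α i)| ^ p) μ :=
    integrable_comp_of_forall_eq_zero_or_one hXm h01
      (φ := fun x => |∑ i, c i * (x i - α i)| ^ p) (by fun_prop)
  have h_re (ω : Ω) : (∑ i, b i * (X i ω - α i)).re = ∑ i, (b i).re * (X i ω - α i) := by
    simp [Complex.re_sum, Complex.mul_re]
  have h_im (ω : Ω) : (∑ i, b i * (X i ω - α i)).im = ∑ i, (b i).im * (X i ω - α i) := by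
    simp [Complex.im_sum, Complex.mul_im]
  calc ∫ ω, ‖∑ i, b i * (X i ω - α i)‖ ^ p ∂μ
      ≤ ∫ ω, 2 ^ (p - 1) * (|∑ i, (b i).re * (X i ω - α i)| ^ p
          + |∑ i, (b i).im * (X i ω - α i)| ^ p) ∂μ := by
        refine integral_mono_of_nonneg (ae_of_all _ fun ω => by positivity)
          (((h_int _).add (h_int _)).const_mul _) (ae_of_all _ fun ω => ?_)
        beta_reduce
        rw [← h_re, ← h_im]
        exact Complex.norm_rpow_le_two_rpow_mul hp _
    _ = 2 ^ (p - 1) * (∫ ω, |∑ i, (b i).re * (X i ω - α i)| ^ p ∂μ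
          + ∫ ω, |∑ i, (b i).im * (X i ω - α i)| ^ p ∂μ) := by
        rw [integral_const_mul, integral_add (h_int _) (h_int _)]
    _ ≤ 2 ^ (p - 1) * (2 * K * Real.exp 1 * σ ^ p + 2 * K * Real.exp 1 * σ ^ p) := by
        gcongr
        · exact h_moment _ fun i => (Complex.abs_re_le_norm _).trans (hb i)
        · exact h_moment _ fun i => (Complex.abs_im_le_norm _).trans (hb i)
    _ = 2 ^ (p + 1) * K * Real.exp 1 * M ^ p * (1 + A) ^ (p / 2) := by
        rw [Real.mul_rpow hM (Real.sqrt_nonneg _), Real.sqrt_eq_rpow, ← Real.rpow_mul (by linarith),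
          show p + 1 = (p - 1) + 2 by ring, Real.rpow_add two_pos]
        ring_nf

end Bernoulli


section NonMeasurable

variable {Ω ι : Type*} [MeasurableSpace Ω] {μ : Measure Ω}

theorem nullMeasurableSet_of_measure_add_measure_compl_le [IsFiniteMeasure μ] {A : Set Ω}
    (h : μ A + μ Aᶜ ≤ μ Set.univ) : NullMeasurableSet A μ := by
  set B := toMeasurable μ A
  set B' := toMeasurable μ Aᶜ
  have h_cover : B ∪ B' = Set.univ := Set.eq_univ_of_forall fun ω =>
    (em (ω ∈ A)).imp (subset_toMeasurable μ A ·) (subset_toMeasurable μ Aᶜ ·)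
  have h_inter : μ (B ∩ B') = 0 := by
    have h_add := measure_union_add_inter (μ := μ) B (measurableSet_toMeasurable μ Aᶜ)
    rw [h_cover, measure_toMeasurable, measure_toMeasurable] at h_add
    refine nonpos_iff_eq_zero.1 ((ENNReal.add_le_add_iff_left (measure_ne_top μ Set.univ)).1 ?_)
    rw [add_zero, h_add]
    exact h
  have h_ae : B =ᵐ[μ] A := ae_eq_set.2
    ⟨measure_mono_null (fun ω hω => show ω ∈ B ∩ B' from ⟨hω.1, subset_toMeasurable μ Aᶜ hω.2⟩)
      h_inter,
      by rw [Set.sdiff_eq_empty.2 (subset_toMeasurable μ A), measure_empty]⟩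
  exact (measurableSet_toMeasurable μ A).nullMeasurableSet.congr h_ae

theorem nullMeasurableSet_of_indep_of_ae_separated [IsProbabilityMeasure μ] {A S G : Set Ω}
    (hG : MeasurableSet G) (hS : μ S ≠ 0) (hA : μ (A ∩ S) = μ A * μ S)
    (hAc : μ (Aᶜ ∩ S) = μ Aᶜ * μ S) (hAG : μ ((A ∩ S) \ G) = 0) (hAcG : μ (Aᶜ ∩ S ∩ G) = 0) :
    NullMeasurableSet A μ := by
  refine nullMeasurableSet_of_measure_add_measure_compl_le ?_
  have h_in : μ (A ∩ S) ≤ μ (S ∩ G) :=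
    calc μ (A ∩ S) ≤ μ (A ∩ S ∩ G) + μ ((A ∩ S) \ G) := measure_le_inter_add_sdiff μ _ G
      _ ≤ μ (S ∩ G) := by
        rw [hAG, add_zero]
        exact measure_mono fun ω hω => ⟨hω.1.2, hω.2⟩
  have h_out : μ (Aᶜ ∩ S) ≤ μ (S \ G) :=
    calc μ (Aᶜ ∩ S) ≤ μ (Aᶜ ∩ S ∩ G) + μ ((Aᶜ ∩ S) \ G) := measure_le_inter_add_sdiff μ _ G
      _ ≤ μ (S \ G) := by
        rw [hAcG, zero_add]
        exact measure_mono fun ω hω => ⟨hω.1.2, hω.2⟩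
  rw [measure_univ, ← ENNReal.mul_le_mul_iff_left hS (measure_ne_top μ S), one_mul, add_mul,
    ← hA, ← hAc, ← measure_inter_add_sdiff S hG]
  exact add_le_add h_in h_out

theorem ProbabilityTheory.iIndepFun.measure_preimage_inter_biInter_eq_mul {β : Type*}
    [MeasurableSpace β] {X : ι → Ω → β} (hX : iIndepFun X μ) {j : ι} {s : Finset ι} (hj : j ∉ s) {u : Set β}
    {t : ι → Set β} (hu : MeasurableSet u) (ht : ∀ i, MeasurableSet (t i)) :
    μ (X j ⁻¹' u ∩ ⋂ i ∈ s, X i ⁻¹' t i) = μ (X j ⁻¹' u) * μ (⋂ i ∈ s, X i ⁻¹' t i) := by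
  classical
  set t' := Function.update t j u
  have htj : t' j = u := Function.update_self j u t
  have h_meas (i : ι) : MeasurableSet (t' i) := by
    by_cases hi : i = j
    · subst hi; simpa [t'] using hu
    · simpa [t', hi] using ht i
  have h_off (i : ι) (hi : i ∈ s) : t' i = t i :=
    Function.update_of_ne (ne_of_mem_of_not_mem hi hj) _ _
  have h_prod := hX.measure_inter_preimage_eq_mul (sets := t')
  have h_s : ⋂ i ∈ s, X i ⁻¹' t' i = ⋂ i ∈ s, X i ⁻¹' t i :=
    Set.iInter₂_congr fun i hi => by rw [h_off i hi]
  calc μ (X j ⁻¹' u ∩ ⋂ i ∈ s, X i ⁻¹' t i) = μ (⋂ i ∈ insert j s, X i ⁻¹' t' i) := by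
        rw [Finset.set_biInter_insert, h_s, htj]
    _ = μ (X j ⁻¹' u) * ∏ i ∈ s, μ (X i ⁻¹' t' i) := by
        rw [h_prod _ fun i _ => h_meas i, prod_insert hj, htj]
    _ = μ (X j ⁻¹' u) * μ (⋂ i ∈ s, X i ⁻¹' t i) := by
        rw [← h_prod _ fun i _ => h_meas i, h_s]

theorem ae_eq_comp_update_zero_of_not_aemeasurable [IsProbabilityMeasure μ] [Fintype ι]
    [DecidableEq ι] {X : ι → Ω → ℝ} (hX : iIndepFun X μ) (h01 : ∀ i ω, X i ω = 0 ∨ X i ω = 1)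
    {j : ι} (hj : ¬AEMeasurable (X j) μ) {g : (ι → ℝ) → ℝ}
    (hg : AEMeasurable (fun ω => g (fun i => X i ω)) μ) :
    (fun ω => g (fun i => X i ω)) =ᵐ[μ] fun ω => g (Function.update (fun i => X i ω) j 0) := by
  set A := X j ⁻¹' {1}
  have hAc : Aᶜ = X j ⁻¹' {0} := by
    ext ω
    rcases h01 j ω with h | h <;> simp [A, h]
  set S : (ι → ℝ) → Set Ω := fun v => ⋂ i ∈ univ.erase j, X i ⁻¹' {v i}
  have h_indep (v : ι → ℝ) (c : ℝ) : μ (X j ⁻¹' {c} ∩ S v) = μ (X j ⁻¹' {c}) * μ (S v) :=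
    hX.measure_preimage_inter_biInter_eq_mul (notMem_erase j univ) (measurableSet_singleton c)
      fun i => measurableSet_singleton _
  have h_atom {v : ι → ℝ} {ω : Ω} (hω : ω ∈ S v) {c : ℝ} (hc : X j ω = c) :
      g (fun i => X i ω) = g (Function.update v j c) := by
    congr 1
    funext i
    by_cases hi : i = j
    · subst hi; simp [hc]
    · simpa [hi] using Set.mem_iInter₂.1 hω i (mem_erase.2 ⟨hi, mem_univ i⟩)
  have h_null (v : ι → ℝ) (hv : g (Function.update v j 1) ≠ g (Function.update v j 0)) :
      μ (S v) = 0 := by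
    by_contra hS
    have h_mk : μ {ω | g (fun i => X i ω) ≠ hg.mk _ ω} = 0 := ae_iff.1 hg.ae_eq_mk
    have hA : NullMeasurableSet A μ := by
      refine nullMeasurableSet_of_indep_of_ae_separated
        (hg.measurable_mk (measurableSet_singleton (g (Function.update v j 1)))) hS
        (h_indep v 1) (hAc ▸ h_indep v 0) (measure_mono_null ?_ h_mk) (measure_mono_null ?_ h_mk)
      · rintro ω ⟨⟨hω1, hωS⟩, hωG⟩
        show _ ≠ _
        rw [h_atom hωS hω1]
        exact Ne.symm hωG
      · rintro ω ⟨⟨hω0, hωS⟩, hωG⟩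
        rw [hAc] at hω0
        show _ ≠ _
        rw [h_atom hωS hω0, show hg.mk _ ω = _ from hωG]
        exact hv.symm
    have hXj : X j = A.indicator 1 := funext fun ω => by
      rcases h01 j ω with h | h <;> simp [A, h]
    exact hj (hXj ▸ aemeasurable_const.indicator₀ hA)
  set V := {v : ι → ℝ | (∀ i, v i = 0 ∨ v i = 1) ∧
    g (Function.update v j 1) ≠ g (Function.update v j 0)}
  have hV : V.Finite :=
    (Set.Finite.pi fun _ : ι => Set.toFinite ({0, 1} : Set ℝ)).subset fun v hv i _ => hv.1 i
  refine ae_iff.2 (measure_mono_null (fun ω hω => ?_)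
    ((measure_biUnion_null_iff hV.countable).2 fun v hv => h_null v hv.2))
  have hXj : X j ω = 1 := (h01 j ω).resolve_left fun h => hω (by
    beta_reduce
    rw [← h, Function.update_eq_self])
  refine Set.mem_biUnion (x := fun i => X i ω) ⟨fun i => h01 i ω, ?_⟩
    (Set.mem_iInter₂.2 fun i _ => rfl)
  rw [← hXj, Function.update_eq_self]
  exact hω

theorem ae_eq_comp_ite_zero_of_not_aemeasurable [IsProbabilityMeasure μ] [Fintype ι]
    [DecidableEq ι] {X : ι → Ω → ℝ} (hX : iIndepFun X μ) (h01 : ∀ i ω, X i ω = 0 ∨ X i ω = 1)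
    {s : Finset ι} (hs : ∀ j ∈ s, ¬AEMeasurable (X j) μ) {g : (ι → ℝ) → ℝ}
    (hg : AEMeasurable (fun ω => g (fun i => X i ω)) μ) :
    (fun ω => g (fun i => X i ω)) =ᵐ[μ] fun ω => g (fun i => if i ∈ s then 0 else X i ω) := by
  induction s using Finset.induction_on with
  | empty => simp
  | insert j s hjs ih =>
    refine (ih fun k hk => hs k (mem_insert_of_mem hk)).trans ?_
    refine (ae_eq_comp_update_zero_of_not_aemeasurable hX h01 (hs j (mem_insert_self j s))
      (g := fun x => g (fun i => if i ∈ s then 0 else x i))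
      (hg.congr (ih fun k hk => hs k (mem_insert_of_mem hk)))).trans (ae_of_all _ fun ω => ?_)
    beta_reduce
    congr 1
    funext i
    by_cases hi : i = j
    · subst hi; simp [hjs]
    · simp [hi]

theorem exists_aemeasurable_comp_ae_eq [IsProbabilityMeasure μ] [Fintype ι] {X : ι → Ω → ℝ}
    {α : ι → ℝ} (hX : iIndepFun X μ) (h01 : ∀ i ω, X i ω = 0 ∨ X i ω = 1)
    (hα : ∀ i, ∫ ω, X i ω ∂μ = α i) {g : (ι → ℝ) → ℝ}
    (hg : AEMeasurable (fun ω => g (fun i => X i ω)) μ) :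
    ∃ Y : ι → Ω → ℝ, iIndepFun Y μ ∧ (∀ i, AEMeasurable (Y i) μ) ∧
      (∀ i ω, Y i ω = 0 ∨ Y i ω = 1) ∧ (∀ i, ∫ ω, Y i ω ∂μ = α i) ∧
      (fun ω => g (fun i => X i ω)) =ᵐ[μ] fun ω => g (fun i => Y i ω) := by
  classical
  set s := univ.filter fun i => ¬AEMeasurable (X i) μ
  have hs (i : ι) : i ∈ s ↔ ¬AEMeasurable (X i) μ := by simp [s]
  refine ⟨fun i ω => if i ∈ s then 0 else X i ω, ?_, fun i => ?_, fun i ω => ?_, fun i => ?_,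
    ae_eq_comp_ite_zero_of_not_aemeasurable hX h01 (fun i => (hs i).1) hg⟩
  · exact hX.comp (fun i x => if i ∈ s then 0 else x) fun i => by
      by_cases hi : i ∈ s <;> simp [hi, measurable_id']
  · by_cases hi : i ∈ s
    · simp [hi]
    · simpa [hi] using not_not.1 ((hs i).not.1 hi)
  · by_cases hi : i ∈ s <;> simp [hi, h01 i ω]
  · by_cases hi : i ∈ s
    · simp only [hi, if_true, integral_zero]
      rw [← hα i, integral_undef fun h => (hs i).1 hi h.aemeasurable]
    · simpa [hi] using hα i

end NonMeasurable

theorem bernoulli_moment_bound (p : ℝ) (hp : 2 < p) :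
    ∃ C : ℝ, ∀ (N : ℕ) (α : Fin (N + 1) → ℝ) (b : Fin (N + 1) → ℂ)
      (Ω : Type) (mΩ : MeasurableSpace Ω) (μ : Measure Ω),
      IsProbabilityMeasure μ →
      ∀ X : Fin (N + 1) → Ω → ℝ,
      (∀ k, α k ∈ Set.Icc (0:ℝ) 1) →
      iIndepFun X μ →
      (∀ k ω, X k ω = 0 ∨ X k ω = 1) →
      (∀ k, ∫ ω, X k ω ∂μ = α k) →
      (∫ ω, ‖∑ k, (b k : ℂ) * ((X k ω : ℝ) - α k)‖ ^ p ∂μ) ≤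
        C * (⨆ k, ‖b k‖) ^ p * (1 + ∑ k, α k) ^ (p / 2) := by
  refine ⟨2 ^ (p + 1) * (1 + (⌈p⌉₊).factorial) * Real.exp 1, ?_⟩
  intro N α b Ω _ μ hμ X hα01 hX h01 hα
  have hA : 0 ≤ 1 + ∑ k, α k := by linarith [sum_nonneg fun k (_ : k ∈ univ) => (hα01 k).1]
  have hM : 0 ≤ ⨆ k, ‖b k‖ := Real.iSup_nonneg fun k => norm_nonneg (b k)
  by_cases hF : AEMeasurable (fun ω => ‖∑ k, (b k : ℂ) * ((X k ω : ℝ) - α k)‖ ^ p) μ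
  · obtain ⟨Y, hY, hYm, hY01, hYα, hXY⟩ := exists_aemeasurable_comp_ae_eq hX h01 hα
      (g := fun x => ‖∑ k, (b k : ℂ) * ((x k : ℝ) - α k)‖ ^ p) hF
    rw [integral_congr_ae hXY]
    exact integral_norm_rpow_sum_le (by linarith) hM
      (fun k => le_ciSup (f := fun k => ‖b k‖) (Set.finite_range _).bddAbove k) hY hYm hY01 hYα
  · rw [integral_undef fun h => hF h.aemeasurable]
    positivity
end
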